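/- Let (b_n) and (c_n) be sequences of nonnegative reals satisfying the recurrences b_{n+1} + c_{n+1} = 3 b_n and c_{n+2} + c_{n+1} = b_n for all n ≥ 1, with b_1 = 6, b_2 = 17, c_2 = 1, c_3 = 5. Then b_n grows like (1+√3)^n up to bounded multiplicative factors; in particular lim_{n→∞} b_n^{1/n} = 1 + √3. -/
import Mathlib


open Filter Real

set_option maxHeartbeats 1000000 in
/-- If `(b n)` and `(c n)` are nonnegative real sequences with
`b (n+1) + c (n+1) = 3 * b n` and `c (n+2) + c (n+1) = b n` for all `n ≥ 1`, and
`b 1 = 6`, `b 2 = 17`, `c 2 = 1`, `c 3 = 5`, then `b n` grows like `(1+√3)^n` up to bounded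
multiplicative factors; in particular `b n ^ (1/n) → 1 + √3`. -/
theorem growth_avoiding_words (b c : ℕ → ℝ)
    (hb : ∀ n, 0 ≤ b n) (hc : ∀ n, 0 ≤ c n)
    (hrec1 : ∀ n, 1 ≤ n → b (n + 1) + c (n + 1) = 3 * b n)
    (hrec2 : ∀ n, 1 ≤ n → c (n + 2) + c (n + 1) = b n)
    (hb1 : b 1 = 6) (hb2 : b 2 = 17) (hc2 : c 2 = 1) (hc3 : c 3 = 5) :
    (∃ C₁ C₂ : ℝ, 0 < C₁ ∧ 0 < C₂ ∧ ∀ n, 1 ≤ n →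
        C₁ * (1 + Real.sqrt 3) ^ n ≤ b n ∧ b n ≤ C₂ * (1 + Real.sqrt 3) ^ n) ∧
    Tendsto (fun n : ℕ => (b n) ^ ((n : ℝ)⁻¹)) atTop (nhds (1 + Real.sqrt 3)) := by
  have h3 : Real.sqrt 3 * Real.sqrt 3 = 3 := Real.mul_self_sqrt (by norm_num)
  have h3nn : (0:ℝ) ≤ Real.sqrt 3 := Real.sqrt_nonneg 3
  have h3lb : 1.7 < Real.sqrt 3 := by nlinarith
  have h3ub : Real.sqrt 3 < 1.8 := by nlinarith
  obtain ⟨r, hr_def⟩ : ∃ x : ℝ, x = 1 + Real.sqrt 3 := ⟨_, rfl⟩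
  obtain ⟨s, hs_def⟩ : ∃ x : ℝ, x = 1 - Real.sqrt 3 := ⟨_, rfl⟩
  obtain ⟨A, hA_def⟩ : ∃ x : ℝ, x = 5/4 + 7*Real.sqrt 3/12 := ⟨_, rfl⟩
  obtain ⟨B, hB_def⟩ : ∃ x : ℝ, x = 5/4 - 7*Real.sqrt 3/12 := ⟨_, rfl⟩
  rw [← hr_def]
  have hr1 : (1:ℝ) < r := by rw [hr_def]; linarith
  have hrpos : (0:ℝ) < r := by linarith
  have hBpos : (0:ℝ) < B := by rw [hB_def]; nlinarith
  have hAB : (0:ℝ) ≤ A - 1 - B := by rw [hA_def, hB_def]; nlinarith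
  have hABsum : A + B = 5/2 := by rw [hA_def, hB_def]; ring
  have hbrec : ∀ n, 1 ≤ n → b (n+2) = 2 * b (n+1) + 2 * b n := by
    intro n hn
    have h1 := hrec1 n hn
    have h2 := hrec1 (n+1) (by omega)
    have h3' := hrec2 n hn
    linarith
  have hr2 : r^2 = 2*r + 2 := by rw [hr_def]; nlinarith
  have hs2 : s^2 = 2*s + 2 := by rw [hs_def]; nlinarith
  have key : ∀ n : ℕ, b (n+1) = A * r^(n+1) + B * s^(n+1) ∧
      b (n+2) = A * r^(n+2) + B * s^(n+2) := by
    intro n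
    induction n with
    | zero =>
      constructor
      · rw [hb1, hr_def, hs_def, hA_def, hB_def]; linear_combination (-7/6) * h3
      · rw [hb2, hr_def, hs_def, hA_def, hB_def]; linear_combination (-29/6) * h3
    | succ k ih =>
      refine ⟨ih.2, ?_⟩
      have hrp : r^(k+3) = 2*r^(k+2) + 2*r^(k+1) := by
        have e : r^(k+3) = r^(k+1) * r^2 := by ring
        rw [e, hr2]; ring
      have hsp : s^(k+3) = 2*s^(k+2) + 2*s^(k+1) := by
        have e : s^(k+3) = s^(k+1) * s^2 := by ring
        rw [e, hs2]; ring
      have hb' := hbrec (k+1) (by omega)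
      rw [show k + 1 + 2 = k + 3 from rfl, hb', ih.1, ih.2, hrp, hsp]; ring
  have hsabs : ∀ n : ℕ, -1 ≤ s^n ∧ s^n ≤ 1 := by
    intro n
    have h1 : |s ^ n| ≤ 1 := by
      rw [abs_pow]
      apply pow_le_one₀ (abs_nonneg _)
      rw [abs_le]; constructor <;> rw [hs_def] <;> linarith
    exact abs_le.mp h1
  have hbound : ∀ n, 1 ≤ n → r^n ≤ b n ∧ b n ≤ (5/2) * r^n := by
    intro n hn
    obtain ⟨m, rfl⟩ : ∃ m, n = m + 1 := ⟨n - 1, by omega⟩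
    have hk := (key m).1
    have hs' := hsabs (m+1)
    have hrn : (1:ℝ) ≤ r^(m+1) := one_le_pow₀ hr1.le
    have h2 : -B ≤ B * s^(m+1) := by nlinarith [hs'.1, hBpos.le]
    have h2' : B * s^(m+1) ≤ B := by nlinarith [hs'.2, hBpos.le]
    have h4 : B ≤ (A-1) * r^(m+1) := by
      nlinarith [mul_nonneg (show (0:ℝ) ≤ A - 1 by linarith)
        (show (0:ℝ) ≤ r^(m+1) - 1 by linarith)]
    constructor
    · rw [hk]
      nlinarith [h2, h4]
    · rw [hk]
      have h5 : B ≤ B * r^(m+1) := by nlinarith [hBpos.le, hrn]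
      have e : A * r^(m+1) + B * r^(m+1) = 5/2 * r^(m+1) := by
        rw [← add_mul, hABsum]
      linarith
  refine ⟨⟨1, 5/2, by norm_num, by norm_num, fun n hn => by
      simpa using hbound n hn⟩, ?_⟩
  have hnn : ∀ᶠ n : ℕ in atTop, 1 ≤ n := eventually_atTop.2 ⟨1, fun n hn => hn⟩
  have hrn_rpow : ∀ n : ℕ, 1 ≤ n → (r ^ n) ^ ((n:ℝ)⁻¹) = r := by
    intro n hn
    have hne : (n:ℝ) ≠ 0 := Nat.cast_ne_zero.mpr (by omega)
    rw [← Real.rpow_natCast r n, ← Real.rpow_mul hrpos.le,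
      mul_inv_cancel₀ hne, Real.rpow_one]
  have hlow : ∀ᶠ n : ℕ in atTop, r ≤ (b n) ^ ((n:ℝ)⁻¹) := by
    filter_upwards [hnn] with n hn
    have h := (hbound n hn).1
    calc r = (r ^ n) ^ ((n:ℝ)⁻¹) := (hrn_rpow n hn).symm
      _ ≤ (b n) ^ ((n:ℝ)⁻¹) :=
        Real.rpow_le_rpow (pow_nonneg hrpos.le n) h (by positivity)
  have hupfun : Tendsto (fun n : ℕ => ((5:ℝ)/2) ^ ((n:ℝ)⁻¹) * r) atTop (nhds r) := by
    have h0 : Tendsto (fun n : ℕ => Real.log (5/2) * (n:ℝ)⁻¹) atTop (nhds 0) := by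
      have h := Tendsto.const_mul (Real.log (5/2))
        (tendsto_inv_atTop_zero.comp (tendsto_natCast_atTop_atTop (R := ℝ)))
      simpa using h
    have h1 : Tendsto (fun n : ℕ => ((5:ℝ)/2) ^ ((n:ℝ)⁻¹)) atTop (nhds 1) := by
      have h2 := (Real.continuous_exp.tendsto 0).comp h0
      rw [Real.exp_zero] at h2
      refine h2.congr fun n => ?_
      simp only [Function.comp_apply]
      rw [Real.rpow_def_of_pos (by norm_num : (0:ℝ) < 5/2)]
    simpa using h1.mul_const r
  have hup : ∀ᶠ n : ℕ in atTop, (b n) ^ ((n:ℝ)⁻¹) ≤ ((5:ℝ)/2) ^ ((n:ℝ)⁻¹) * r := by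
    filter_upwards [hnn] with n hn
    have h := (hbound n hn).2
    calc (b n) ^ ((n:ℝ)⁻¹) ≤ ((5/2) * r ^ n) ^ ((n:ℝ)⁻¹) :=
          Real.rpow_le_rpow (hb n) h (by positivity)
      _ = ((5:ℝ)/2) ^ ((n:ℝ)⁻¹) * r := by
          rw [Real.mul_rpow (by norm_num) (pow_nonneg hrpos.le n), hrn_rpow n hn]
  exact tendsto_of_tendsto_of_tendsto_of_le_of_le' tendsto_const_nhds hupfun hlow hup
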